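/- arXiv:math/9406206 — 2 statements merged into one kernel-verified Lean document; each statement's English description precedes it below -/
import Mathlib

section
/- If g is a generator occurring in exactly one relator r of a presentation, and r = u * g * v with u, v words not involving g, then the presentation obtained by deleting the generator g and the relator r presents an isomorphic group: F(X)/N(R) ≅ F(X∖{g})/N(R∖{r}). -/
theorem long_elimination_iso {X : Type*} [DecidableEq X] (g : X)
    (ι : FreeGroup {x : X // x ≠ g} →* FreeGroup X)
    (hι : ι = FreeGroup.map (Subtype.val : {x : X // x ≠ g} → X))
    (R : Set (FreeGroup X)) (r : FreeGroup X) (hr : r ∈ R)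
    (u v : FreeGroup {x : X // x ≠ g})
    (hruv : r = ι u * FreeGroup.of g * ι v)
    (hothers : ∀ s ∈ R, s ≠ r → s ∈ Set.range ι) :
    Nonempty ((FreeGroup X ⧸ Subgroup.normalClosure R) ≃*
      (FreeGroup {x : X // x ≠ g} ⧸ Subgroup.normalClosure (ι ⁻¹' (R \ {r})))) := by
  set R' : Set (FreeGroup {x : X // x ≠ g}) := ι ⁻¹' (R \ {r}) with hR'
  set π : FreeGroup X →* FreeGroup X ⧸ Subgroup.normalClosure R :=
    QuotientGroup.mk' _ with hπ
  set π' : FreeGroup {x : X // x ≠ g} →*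
      FreeGroup {x : X // x ≠ g} ⧸ Subgroup.normalClosure R' :=
    QuotientGroup.mk' _ with hπ'
  set φ : FreeGroup X →* FreeGroup {x : X // x ≠ g} ⧸ Subgroup.normalClosure R' :=
    FreeGroup.lift (fun x =>
      if h : x = g then (π' u)⁻¹ * (π' v)⁻¹ else π' (FreeGroup.of ⟨x, h⟩)) with hφ
  have hιof : ∀ x' : {x : X // x ≠ g}, ι (FreeGroup.of x') = FreeGroup.of x'.val := by
    intro x'; rw [hι]; simp [FreeGroup.map.of]
  have hφof : ∀ x' : {x : X // x ≠ g}, φ (FreeGroup.of x'.val) = π' (FreeGroup.of x') := by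
    intro x'
    rw [hφ]
    simp only [FreeGroup.lift_apply_of]
    rw [dif_neg x'.2]
  have hφι : ∀ w, φ (ι w) = π' w := by
    intro w
    have : φ.comp ι = π' := by
      apply FreeGroup.ext_hom
      intro x'
      simp only [MonoidHom.comp_apply, hιof, hφof]
    calc φ (ι w) = (φ.comp ι) w := rfl
    _ = π' w := by rw [this]
  have hφg : φ (FreeGroup.of g) = (π' u)⁻¹ * (π' v)⁻¹ := by
    rw [hφ]; simp
  have hker : Subgroup.normalClosure R ≤ φ.ker := by
    apply Subgroup.normalClosure_le_normal
    intro s hs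
    by_cases hsr : s = r
    · subst hsr
      simp only [SetLike.mem_coe, MonoidHom.mem_ker]
      rw [hruv]
      simp only [map_mul, hφι, hφg]
      group
    · obtain ⟨w, hw⟩ := hothers s hs hsr
      simp only [SetLike.mem_coe, MonoidHom.mem_ker]
      rw [← hw, hφι]
      have hw' : w ∈ R' := by
        rw [hR']
        simp only [Set.mem_preimage, Set.mem_diff, Set.mem_singleton_iff, hw]
        exact ⟨hs, hsr⟩
      rw [hπ']
      simpa [QuotientGroup.eq_one_iff] using Subgroup.subset_normalClosure hw'
  have hker' : Subgroup.normalClosure R' ≤ (π.comp ι).ker := by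
    apply Subgroup.normalClosure_le_normal
    intro w hw
    simp only [SetLike.mem_coe, MonoidHom.mem_ker, MonoidHom.comp_apply]
    rw [hπ]
    have : ι w ∈ R := (hw : w ∈ R').1
    simpa [QuotientGroup.eq_one_iff] using Subgroup.subset_normalClosure this
  set Φ : (FreeGroup X ⧸ Subgroup.normalClosure R) →*
      FreeGroup {x : X // x ≠ g} ⧸ Subgroup.normalClosure R' :=
    QuotientGroup.lift _ φ hker with hΦ
  set Ψ : (FreeGroup {x : X // x ≠ g} ⧸ Subgroup.normalClosure R') →*
      FreeGroup X ⧸ Subgroup.normalClosure R :=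
    QuotientGroup.lift _ (π.comp ι) hker' with hΨ
  have hΦπ : ∀ w, Φ (π w) = φ w := fun w => rfl
  have hΨπ' : ∀ w, Ψ (π' w) = π (ι w) := fun w => rfl
  have h1 : Φ.comp Ψ = MonoidHom.id _ := by
    apply QuotientGroup.monoidHom_ext
    apply FreeGroup.ext_hom
    intro x'
    simp only [MonoidHom.comp_apply, MonoidHom.id_apply]
    show Φ (Ψ (π' (FreeGroup.of x'))) = π' (FreeGroup.of x')
    rw [hΨπ', hΦπ, hιof, hφof]
  have hrel : π (FreeGroup.of g) = (π (ι u))⁻¹ * (π (ι v))⁻¹ := by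
    have h1 : π r = 1 := by
      rw [hπ]
      simpa [QuotientGroup.eq_one_iff] using Subgroup.subset_normalClosure hr
    rw [hruv] at h1
    simp only [map_mul] at h1
    calc π (FreeGroup.of g)
        = (π (ι u))⁻¹ * (π (ι u) * π (FreeGroup.of g) * π (ι v)) * (π (ι v))⁻¹ := by group
    _ = (π (ι u))⁻¹ * 1 * (π (ι v))⁻¹ := by rw [h1]
    _ = (π (ι u))⁻¹ * (π (ι v))⁻¹ := by group
  have h2 : Ψ.comp Φ = MonoidHom.id _ := by
    apply QuotientGroup.monoidHom_ext
    apply FreeGroup.ext_hom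
    intro x
    simp only [MonoidHom.comp_apply, MonoidHom.id_apply]
    show Ψ (Φ (π (FreeGroup.of x))) = π (FreeGroup.of x)
    rw [hΦπ]
    by_cases hx : x = g
    · subst hx
      rw [hφg]
      simp only [map_mul, map_inv, hΨπ']
      rw [hrel]
    · have : (FreeGroup.of x : FreeGroup X) = FreeGroup.of (⟨x, hx⟩ : {x : X // x ≠ g}).val := rfl
      rw [this, hφof, hΨπ', hιof]
  exact ⟨MonoidHom.toMulEquiv Φ Ψ h2 h1⟩
end

section
/- The common substring search between the rotations/inverses of two relators decomposes as: ComStr(R_p, R_t) succeeds iff com_substr(R_p', R_t') or com_substr(R_p⁻¹', R_t') succeeds, where R' denotes the extension of R by its first ⌈(l_p+1)/2⌉ symbols. Formal version: there exist rotations ρ_i(R_p) (or a formal inverse thereof) and ρ_j(R_t) sharing a common substring of length k ≤ ⌈(l_p+1)/2⌉ iff the extensions R_p ++ take ⌈(l_p+1)/2⌉ R_p (or its formal inverse analog) and R_t ++ take ⌈(l_p+1)/2⌉ R_t share a common substring of length k. -/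
/-!
Every rotation of `R` is an infix of `R ++ R`, and conversely every infix of `R ++ R` of length
at most `|R|` lies inside a single rotation; an infix of length at most `m` of `R ++ R` already
lies in `R ++ R.take m`. The formal inverse of the `i`-th rotation of `R` is the `(|R| - i)`-th
rotation of the formal inverse of `R`, so both searches reduce to infixes of the extensions.
Since `k ≤ ⌈(l_p + 1)/2⌉ ≤ l_p ≤ l_t` once `R_p` is nonempty, these facts apply to both relators.
-/

namespace List

variable {α β : Type*}

theorem drop_append_take_infix_append_self (R : List α) (i : ℕ) :
    R.drop i ++ R.take i <:+: R ++ R :=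
  ⟨R.take i, R.drop i, by
    rw [← append_assoc (R.take i), take_append_drop, append_assoc, take_append_drop]⟩

theorem infix_of_append_append_eq_append_of_length_le {s v t l₁ l₂ : List α}
    (heq : s ++ v ++ t = l₁ ++ l₂) (hs : l₁.length ≤ s.length) : v <:+: l₂ := by
  refine ⟨s.drop l₁.length, t, ?_⟩
  have h := congrArg (drop l₁.length) heq
  rwa [append_assoc, drop_append, Nat.sub_eq_zero_of_le hs, drop_zero, drop_left,
    ← append_assoc] at h

theorem take_length_drop_append_self {R : List α} {i : ℕ} (hi : i ≤ R.length) :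
    ((R ++ R).drop i).take R.length = R.drop i ++ R.take i := by
  rw [drop_append_of_le_length hi, take_append, take_of_length_le (by simp),
    length_drop, Nat.sub_sub_self hi]

theorem exists_le_length_infix_drop_append_take {R v : List α} (h : v <:+: R ++ R)
    (hv : v.length ≤ R.length) : ∃ i ≤ R.length, v <:+: R.drop i ++ R.take i := by
  obtain ⟨s, t, heq⟩ := h
  rcases le_or_gt R.length s.length with hs | hs
  · exact ⟨0, R.length.zero_le, by simpa using infix_of_append_append_eq_append_of_length_le heq hs⟩
  · refine ⟨s.length, hs.le, ?_⟩
    have hpre : v <+: (R ++ R).drop s.length := ⟨t, by rw [← heq, append_assoc, drop_left]⟩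
    rw [← take_length_drop_append_self hs.le]
    exact (prefix_take_iff.2 ⟨hpre, hv⟩).isInfix

theorem infix_append_take_iff_infix_append_self {R v : List α} {m : ℕ} (hv : v.length ≤ m) :
    v <:+: R ++ R.take m ↔ v <:+: R ++ R := by
  refine ⟨fun h => h.trans ((prefix_append_right_inj R).2 (take_prefix m R)).isInfix, ?_⟩
  rintro ⟨s, t, heq⟩
  rcases le_or_gt R.length s.length with hs | hs
  · exact (infix_of_append_append_eq_append_of_length_le heq hs).trans (infix_append [] R _)
  · have hpre : s ++ v <+: (R ++ R).take (R.length + m) :=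
      prefix_take_iff.2 ⟨⟨t, heq⟩, by rw [length_append]; omega⟩
    rw [take_length_add_append] at hpre
    exact (suffix_append s v).isInfix.trans hpre.isInfix

theorem reverse_map_drop_append_take (f : α → β) (R : List α) (i : ℕ) :
    ((R.drop i ++ R.take i).map f).reverse =
      (R.map f).reverse.drop (R.length - i) ++ (R.map f).reverse.take (R.length - i) := by
  rw [map_append, reverse_append, map_take, map_drop, reverse_take, reverse_drop, length_map]

theorem exists_infix_drop_append_take_iff {R v : List α} {m : ℕ} (hvR : v.length ≤ R.length)
    (hvm : v.length ≤ m) : (∃ i, v <:+: R.drop i ++ R.take i) ↔ v <:+: R ++ R.take m := by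
  rw [infix_append_take_iff_infix_append_self hvm]
  exact ⟨fun ⟨i, h⟩ => h.trans (drop_append_take_infix_append_self R i),
    fun h => (exists_le_length_infix_drop_append_take h hvR).imp fun _ => And.right⟩

theorem exists_infix_reverse_map_drop_append_take_iff (f : α → β) {R : List α} {v : List β}
    {m : ℕ} (hvR : v.length ≤ R.length) (hvm : v.length ≤ m) :
    (∃ i, v <:+: ((R.drop i ++ R.take i).map f).reverse) ↔
      v <:+: (R.map f).reverse ++ (R.map f).reverse.take m := by
  rw [infix_append_take_iff_infix_append_self hvm]
  constructor
  · rintro ⟨i, h⟩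
    rw [reverse_map_drop_append_take] at h
    exact h.trans (drop_append_take_infix_append_self _ _)
  · intro h
    obtain ⟨i, hi, h⟩ := exists_le_length_infix_drop_append_take h (by simpa using hvR)
    refine ⟨R.length - i, ?_⟩
    rwa [reverse_map_drop_append_take, Nat.sub_sub_self (by simpa using hi)]

end List

open List in
theorem comStr_decomposition_general {α : Type*} (inv : α → α)
    (Rp Rt : List α) (hlen : Rp.length ≤ Rt.length) (k : ℕ)
    (hk : k ≤ (Rp.length + 2) / 2) :
    (∃ (i j : ℕ) (v : List α), v.length = k ∧
        (v <:+: Rp.drop i ++ Rp.take i ∨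
          v <:+: ((Rp.drop i ++ Rp.take i).map inv).reverse) ∧
        v <:+: Rt.drop j ++ Rt.take j) ↔
      (∃ v : List α, v.length = k ∧
        (v <:+: Rp ++ Rp.take ((Rp.length + 2) / 2) ∨
          v <:+: (Rp.map inv).reverse ++ ((Rp.map inv).reverse).take ((Rp.length + 2) / 2)) ∧
        v <:+: Rt ++ Rt.take ((Rp.length + 2) / 2)) := by
  rcases eq_or_ne Rp [] with rfl | hRp
  · simp
  have hkp : k ≤ Rp.length := by have := length_pos_iff.2 hRp; omega
  have hkt : k ≤ Rt.length := hkp.trans hlen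
  constructor
  · rintro ⟨i, j, v, rfl, hp, ht⟩
    exact ⟨v, rfl,
      hp.imp (fun h => (exists_infix_drop_append_take_iff hkp hk).1 ⟨i, h⟩)
        (fun h => (exists_infix_reverse_map_drop_append_take_iff inv hkp hk).1 ⟨i, h⟩),
      (exists_infix_drop_append_take_iff hkt hk).1 ⟨j, ht⟩⟩
  · rintro ⟨v, rfl, hp, ht⟩
    obtain ⟨j, ht⟩ := (exists_infix_drop_append_take_iff hkt hk).2 ht
    rcases hp with hp | hp
    · obtain ⟨i, hp⟩ := (exists_infix_drop_append_take_iff hkp hk).2 hp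
      exact ⟨i, j, v, rfl, .inl hp, ht⟩
    · obtain ⟨i, hp⟩ := (exists_infix_reverse_map_drop_append_take_iff inv hkp hk).2 hp
      exact ⟨i, j, v, rfl, .inr hp, ht⟩

theorem comStr_decomposition {α : Type*} (inv : α → α) (hinv : Function.Involutive inv)
    (Rp Rt : List α) (hlen : Rp.length ≤ Rt.length) (k : ℕ)
    (hk : k ≤ (Rp.length + 2) / 2) :
    (∃ (i j : ℕ) (v : List α), v.length = k ∧
        (v <:+: Rp.drop i ++ Rp.take i ∨
          v <:+: ((Rp.drop i ++ Rp.take i).map inv).reverse) ∧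
        v <:+: Rt.drop j ++ Rt.take j) ↔
      (∃ v : List α, v.length = k ∧
        (v <:+: Rp ++ Rp.take ((Rp.length + 2) / 2) ∨
          v <:+: (Rp.map inv).reverse ++ ((Rp.map inv).reverse).take ((Rp.length + 2) / 2)) ∧
        v <:+: Rt ++ Rt.take ((Rp.length + 2) / 2)) :=
  comStr_decomposition_general inv Rp Rt hlen k hk
end
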